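/- arXiv:2310.15353 — 10 statements merged into one kernel-verified Lean document; each statement's English description precedes it below -/
import Mathlib

section
/- For every 3×3 complex matrix ρ, (1/2)(J₁ ρ J₁ + J₂ ρ J₂ + J₃ ρ J₃) = (1/2)(Tr(ρ)·I₃ − ρᵀ); that is, the spin-1 Landau–Streater channel coincides with the Werner–Holevo channel. -/
/-!
The spin-1 matrices are `(J_k)_{ab} = -i ε_{kab}`, so
`(∑ₖ J_k ρ J_k)_{ad} = -∑_{b,c} ρ_{bc} ∑ₖ ε_{kab} ε_{kcd}`, and the contraction identity
`∑ₖ ε_{kab} ε_{kcd} = δ_{ac} δ_{bd} - δ_{ad} δ_{bc}` turns the right-hand side into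
`δ_{ad} Tr ρ - ρ_{da}`.
-/

open Matrix

/-- The spin-1 matrix `J₁ = -i[[0,0,0],[0,0,1],[0,-1,0]]`. -/
noncomputable def J1 : Matrix (Fin 3) (Fin 3) ℂ :=
  (-Complex.I) • !![0, 0, 0; 0, 0, 1; 0, -1, 0]

/-- The spin-1 matrix `J₂ = -i[[0,0,-1],[0,0,0],[1,0,0]]`. -/
noncomputable def J2 : Matrix (Fin 3) (Fin 3) ℂ :=
  (-Complex.I) • !![0, 0, -1; 0, 0, 0; 1, 0, 0]

/-- The spin-1 matrix `J₃ = -i[[0,1,0],[-1,0,0],[0,0,0]]`. -/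
noncomputable def J3 : Matrix (Fin 3) (Fin 3) ℂ :=
  (-Complex.I) • !![0, 1, 0; -1, 0, 0; 0, 0, 0]

def leviCivita (R : Type*) [Ring R] : Fin 3 → Fin 3 → Fin 3 → R
  | 0, 1, 2 | 1, 2, 0 | 2, 0, 1 => 1
  | 0, 2, 1 | 2, 1, 0 | 1, 0, 2 => -1
  | _, _, _ => 0

section LeviCivita

variable {R : Type*} [CommRing R]

theorem sum_leviCivita_mul_leviCivita (a b c d : Fin 3) :
    ∑ k, leviCivita R k a b * leviCivita R k c d =
      (if a = c ∧ b = d then 1 else 0) - (if a = d ∧ b = c then 1 else 0) := by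
  fin_cases a <;> fin_cases b <;> fin_cases c <;> fin_cases d <;>
    simp [Fin.sum_univ_three, leviCivita]

theorem sum_leviCivita_mul_mul_leviCivita (ρ : Matrix (Fin 3) (Fin 3) R) :
    ∑ k, of (leviCivita R k) * ρ * of (leviCivita R k) = ρᵀ - ρ.trace • 1 := by
  ext a d
  calc (∑ k, of (leviCivita R k) * ρ * of (leviCivita R k)) a d
      = ∑ b, ∑ c, ρ b c * ∑ k, leviCivita R k a b * leviCivita R k c d := by
        simp only [Matrix.sum_apply, mul_apply, of_apply, Finset.sum_mul, Finset.mul_sum]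
        rw [Finset.sum_comm_cycle]
        refine Finset.sum_congr rfl fun b _ => Finset.sum_comm.trans ?_
        refine Finset.sum_congr rfl fun c _ => Finset.sum_congr rfl fun k _ => ?_
        ring
    _ = (ρᵀ - ρ.trace • 1) a d := by
        simp only [sum_leviCivita_mul_leviCivita, mul_sub, mul_ite, mul_one, mul_zero,
          Finset.sum_sub_distrib]
        simp [trace, one_apply, ite_and]

end LeviCivita

theorem J1_eq_smul_leviCivita : J1 = -Complex.I • of (leviCivita ℂ 0) := by
  ext a b; fin_cases a <;> fin_cases b <;> simp [J1, leviCivita]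

theorem J2_eq_smul_leviCivita : J2 = -Complex.I • of (leviCivita ℂ 1) := by
  ext a b; fin_cases a <;> fin_cases b <;> simp [J2, leviCivita]

theorem J3_eq_smul_leviCivita : J3 = -Complex.I • of (leviCivita ℂ 2) := by
  ext a b; fin_cases a <;> fin_cases b <;> simp [J3, leviCivita]

/-- The spin-1 Landau–Streater channel coincides with the Werner–Holevo channel. -/
theorem landau_streater_eq_werner_holevo (ρ : Matrix (Fin 3) (Fin 3) ℂ) :
    (1 / 2 : ℂ) • (J1 * ρ * J1 + J2 * ρ * J2 + J3 * ρ * J3) =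
      (1 / 2 : ℂ) • (ρ.trace • (1 : Matrix (Fin 3) (Fin 3) ℂ) - ρᵀ) := by
  have h := sum_leviCivita_mul_mul_leviCivita ρ
  rw [Fin.sum_univ_three] at h
  congr 1
  simp only [J1_eq_smul_leviCivita, J2_eq_smul_leviCivita, J3_eq_smul_leviCivita,
    smul_mul_assoc, mul_smul_comm, smul_smul, ← smul_add, h]
  rw [neg_mul_neg, Complex.I_mul_I, neg_one_smul, neg_sub]
end

section
/- For every x ∈ ℝ, every real orthogonal 3×3 matrix O (i.e. Oᵀ·O = I₃), viewed as a complex matrix, and every 3×3 complex matrix ρ, one has Λ_x(O ρ Oᵀ) = O · Λ_x(ρ) · Oᵀ; i.e., the interpolated channel Λ_x is covariant under the orthogonal group O(3). -/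
open Matrix

/-- The interpolated Landau–Streater/Werner–Holevo channel
`Λ_x(ρ) = (1−x)·ρ + (x/2)·(Tr(ρ)·I₃ − ρᵀ)`. -/
noncomputable def Lam (x : ℝ) (ρ : Matrix (Fin 3) (Fin 3) ℂ) : Matrix (Fin 3) (Fin 3) ℂ :=
  ((1 : ℂ) - (x : ℂ)) • ρ + ((x : ℂ) / 2) • (ρ.trace • (1 : Matrix (Fin 3) (Fin 3) ℂ) - ρᵀ)

namespace Matrix

variable {n R : Type*} [Fintype n]

section CommSemiring

variable [CommSemiring R]

theorem transpose_mul_mul_transpose (U A : Matrix n n R) :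
    (U * A * Uᵀ)ᵀ = U * Aᵀ * Uᵀ := by
  rw [transpose_mul, transpose_mul, transpose_transpose, Matrix.mul_assoc]

variable [DecidableEq n]

theorem trace_mul_mul_transpose_of_transpose_mul_self {U : Matrix n n R} (hU : Uᵀ * U = 1)
    (A : Matrix n n R) : (U * A * Uᵀ).trace = A.trace := by
  rw [trace_mul_cycle, hU, Matrix.one_mul]

theorem transpose_map_mul_map_eq_one {S : Type*} [CommSemiring S] (f : R →+* S)
    {O : Matrix n n R} (hO : Oᵀ * O = 1) : (O.map f)ᵀ * O.map f = 1 := by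
  rw [← transpose_map, ← Matrix.map_mul, hO, Matrix.map_one _ f.map_zero f.map_one]

end CommSemiring

variable [DecidableEq n] [CommRing R]

theorem smul_add_smul_trace_sub_transpose_conj {U : Matrix n n R} (hU : Uᵀ * U = 1)
    (a b : R) (A : Matrix n n R) :
    a • (U * A * Uᵀ) + b • ((U * A * Uᵀ).trace • 1 - (U * A * Uᵀ)ᵀ) =
      U * (a • A + b • (A.trace • 1 - Aᵀ)) * Uᵀ := by
  have hU' : U * Uᵀ = 1 := mul_eq_one_comm.mp hU
  rw [trace_mul_mul_transpose_of_transpose_mul_self hU, transpose_mul_mul_transpose]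
  simp only [Matrix.mul_add, Matrix.add_mul, Matrix.mul_smul, Matrix.smul_mul, Matrix.mul_sub,
    Matrix.sub_mul, Matrix.mul_one, hU']

end Matrix

/-- The channel `Λ_x` is covariant under the orthogonal group `O(3)`:
for a real orthogonal matrix `O` (viewed as a complex matrix),
`Λ_x(O ρ Oᵀ) = O Λ_x(ρ) Oᵀ`. -/
theorem lam_orthogonal_covariant (x : ℝ) (O : Matrix (Fin 3) (Fin 3) ℝ)
    (hO : Oᵀ * O = 1) (ρ : Matrix (Fin 3) (Fin 3) ℂ) :
    Lam x (O.map Complex.ofReal * ρ * (O.map Complex.ofReal)ᵀ) =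
      O.map Complex.ofReal * Lam x ρ * (O.map Complex.ofReal)ᵀ :=
  smul_add_smul_trace_sub_transpose_conj (transpose_map_mul_map_eq_one Complex.ofRealHom hO) _ _ ρ
end

section
/- For every x ∈ ℝ: (a) Λ_x(I₃) = I₃; (b) for every 3×3 complex matrix A with Aᵀ = A and Tr(A) = 0, Λ_x(A) = (1 − 3x/2)·A; (c) for every 3×3 complex matrix B with Bᵀ = −B, Λ_x(B) = (1 − x/2)·B. Hence Λ_x has eigenvalue 1 (multiplicity 1), eigenvalue 1 − 3x/2 (multiplicity 5) and eigenvalue 1 − x/2 (multiplicity 3). -/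
open Matrix

theorem Matrix.trace_eq_zero_of_transpose_eq_neg {n R : Type*} [Fintype n] [AddCommGroup R]
    [IsAddTorsionFree R] {A : Matrix n n R} (h : Aᵀ = -A) : A.trace = 0 :=
  self_eq_neg.mp (by rw [← trace_neg, ← h, trace_transpose])

theorem lam_one (x : ℝ) : Lam x 1 = 1 := by
  simp only [Lam, transpose_one, trace_one, Fintype.card_fin]
  push_cast
  module

theorem lam_of_transpose_eq_self_of_trace_eq_zero (x : ℝ) {A : Matrix (Fin 3) (Fin 3) ℂ}
    (hA : Aᵀ = A) (hTr : A.trace = 0) : Lam x A = (1 - 3 * (x : ℂ) / 2) • A := by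
  simp only [Lam, hA, hTr, zero_smul, zero_sub]
  module

theorem lam_of_transpose_eq_neg (x : ℝ) {B : Matrix (Fin 3) (Fin 3) ℂ} (hB : Bᵀ = -B) :
    Lam x B = (1 - (x : ℂ) / 2) • B := by
  simp only [Lam, hB, trace_eq_zero_of_transpose_eq_neg hB, zero_smul, zero_sub, neg_neg]
  module

/-- Spectral decomposition of `Λ_x`:
(a) the identity is fixed, `Λ_x(I₃) = I₃`;
(b) traceless symmetric matrices are eigenvectors with eigenvalue `1 − 3x/2`;
(c) antisymmetric matrices are eigenvectors with eigenvalue `1 − x/2`.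
(Hence `Λ_x` has eigenvalue `1` with multiplicity `1`, eigenvalue `1 − 3x/2`
with multiplicity `5`, and eigenvalue `1 − x/2` with multiplicity `3`.) -/
theorem lam_spectrum (x : ℝ) :
    Lam x (1 : Matrix (Fin 3) (Fin 3) ℂ) = 1 ∧
    (∀ A : Matrix (Fin 3) (Fin 3) ℂ, Aᵀ = A → A.trace = 0 →
      Lam x A = ((1 : ℂ) - 3 * (x : ℂ) / 2) • A) ∧
    (∀ B : Matrix (Fin 3) (Fin 3) ℂ, Bᵀ = -B →
      Lam x B = ((1 : ℂ) - (x : ℂ) / 2) • B) :=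
  ⟨lam_one x, fun _ hA hTr => lam_of_transpose_eq_self_of_trace_eq_zero x hA hTr,
    fun _ hB => lam_of_transpose_eq_neg x hB⟩
end

section
/- For every real x with 0 ≤ x ≤ 1, the Choi matrix of Λ_x, namely the 9×9 complex matrix J(Λ_x) = Σ_{i,j∈{1,2,3}} E_{ij} ⊗ Λ_x(E_{ij}) (Kronecker product, where E_{ij} = |i⟩⟨j| is the matrix unit), is positive semidefinite; i.e., Λ_x is completely positive. -/
/-!
The Choi matrix of `Λ_x` is `(1 - x) |Ω⟩⟨Ω| + (x / 2) (1 - F)`, where `Ω = ∑ᵢ eᵢ ⊗ eᵢ` and `F` is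
the swap operator `eᵢ ⊗ eⱼ ↦ eⱼ ⊗ eᵢ`. The first term is a rank-one positive matrix, and since `F` is
a self-adjoint unitary, `(1 - F)ᴴ (1 - F) = 2 (1 - F)`, so `1 - F` is positive as well.
-/

open Matrix Kronecker
open scoped ComplexOrder

/-- The Choi matrix `J(Λ_x) = Σ_{i,j} E_{ij} ⊗ Λ_x(E_{ij})`. -/
noncomputable def choi (x : ℝ) : Matrix (Fin 3 × Fin 3) (Fin 3 × Fin 3) ℂ :=
  ∑ i : Fin 3, ∑ j : Fin 3,
    (Matrix.single i j (1 : ℂ)) ⊗ₖ Lam x (Matrix.single i j (1 : ℂ))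

namespace Matrix

variable {m n : Type*} [Fintype n] [DecidableEq n]

theorem sum_single_kronecker_apply {R : Type*} [Semiring R] (Φ : Matrix n n R → Matrix m m R)
    (a c : n) (b d : m) :
    (∑ i, ∑ j, single i j (1 : R) ⊗ₖ Φ (single i j 1)) (a, b) (c, d) =
      Φ (single a c 1) b d := by
  simp [Matrix.sum_apply, kroneckerMap_apply, single_apply, ite_and]

variable {𝕜 : Type*} [RCLike 𝕜]

theorem PosSemidef.one_sub_of_isHermitian_of_mul_self {S : Matrix n n 𝕜} (hS : S.IsHermitian)
    (hSS : S * S = 1) : (1 - S).PosSemidef := by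
  have hsq : (1 - S)ᴴ * (1 - S) = (2 : 𝕜) • (1 - S) := by
    rw [conjTranspose_sub, conjTranspose_one, hS.eq,
      show (1 - S) * (1 - S) = 1 - 2 • S + S * S by noncomm_ring, hSS]
    module
  have key : 1 - S = (2⁻¹ : 𝕜) • ((1 - S)ᴴ * (1 - S)) := by
    rw [hsq, smul_smul, inv_mul_cancel₀ two_ne_zero, one_smul]
  rw [key]
  exact (posSemidef_conjTranspose_mul_self _).smul (by positivity)

theorem PosSemidef.one_sub_permMatrix_of_involutive {σ : Equiv.Perm n}
    (hσ : Function.Involutive σ) : (1 - σ.permMatrix 𝕜).PosSemidef := by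
  have hσσ : σ * σ = 1 := Equiv.ext hσ
  have hinv : σ⁻¹ = σ := inv_eq_of_mul_eq_one_right hσσ
  refine .one_sub_of_isHermitian_of_mul_self ?_ ?_
  · simp [IsHermitian, hinv]
  · rw [← permMatrix_mul, hσσ, permMatrix_one]

end Matrix

def maxEntangledVec (R n : Type*) [DecidableEq n] [Zero R] [One R] : n × n → R :=
  fun p => (1 : Matrix n n R) p.1 p.2

theorem choi_apply (x : ℝ) (a b c d : Fin 3) :
    choi x (a, b) (c, d) = Lam x (single a c 1) b d :=
  sum_single_kronecker_apply _ a c b d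

theorem choi_eq (x : ℝ) :
    choi x =
      (1 - (x : ℂ)) • vecMulVec (maxEntangledVec ℂ (Fin 3)) (star (maxEntangledVec ℂ (Fin 3))) +
      ((x : ℂ) / 2) • (1 - Equiv.Perm.permMatrix ℂ (Equiv.prodComm (Fin 3) (Fin 3))) := by
  ext ⟨a, b⟩ ⟨c, d⟩
  have htrace : (single a c (1 : ℂ)).trace = if a = c then 1 else 0 := by
    split_ifs with hac
    · exact hac ▸ trace_single_eq_same a 1
    · exact trace_single_eq_of_ne a c 1 hac
  simp only [choi_apply, Lam, htrace, maxEntangledVec, Matrix.add_apply, Matrix.sub_apply,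
    Matrix.smul_apply, transpose_apply, single_apply, one_apply, vecMulVec_apply, Pi.star_apply,
    Equiv.Perm.permMatrix, PEquiv.toMatrix_apply, Equiv.toPEquiv_apply, Option.mem_def,
    Option.some.injEq, Equiv.prodComm_apply, Prod.swap_prod_mk, Prod.mk.injEq, smul_eq_mul,
    apply_ite star, star_one, star_zero]
  split_ifs <;> grind

/-- For `0 ≤ x ≤ 1`, the Choi matrix of `Λ_x` is positive semidefinite;
i.e., `Λ_x` is completely positive. -/
theorem lam_choi_posSemidef (x : ℝ) (hx0 : 0 ≤ x) (hx1 : x ≤ 1) :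
    (choi x).PosSemidef := by
  rw [choi_eq]
  refine ((posSemidef_vecMulVec_self_star _).smul ?_).add
    ((PosSemidef.one_sub_permMatrix_of_involutive (σ := Equiv.prodComm _ _) Prod.swap_swap).smul ?_)
  · exact_mod_cast sub_nonneg.mpr hx1
  · exact_mod_cast div_nonneg hx0 zero_le_two
end

section
/- Covariance of the complementary channel: let n and ι be finite index types, K : ι → M_n(ℂ) a finite family of matrices, U, V ∈ M_n(ℂ) with U unitary, and Ω an ι×ι complex matrix such that V† · K_α · U = Σ_β Ω_{αβ} · K_β for every α ∈ ι. Define Φ^c(ρ) to be the ι×ι matrix with entries (Φ^c(ρ))_{αβ} = Tr(K_α ρ K_β†). Then for every ρ ∈ M_n(ℂ), Φ^c(U ρ U†) = Ω · Φ^c(ρ) · Ω†, provided V is unitary. -/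
/-!
Unitarity of `V` turns the hypothesis into `K α * U = V * ∑ β, Ω α β • K β`. Conjugating `ρ` by `U`
thus replaces the Kraus family by this one; the cyclicity of the trace and `Vᴴ * V = 1` remove `V`,
and the entries `Tr(K_α ρ K_β†)` are linear in `K_α` and conjugate-linear in `K_β`, which produces
`Ω * Φᶜ(ρ) * Ωᴴ`.
-/

open Matrix

section

variable {ι k l m n R : Type*} [Fintype m] [Fintype n] [CommSemiring R] [StarRing R]

def complementaryChannel (K : ι → Matrix m n R) (ρ : Matrix n n R) : Matrix ι ι R :=
  Matrix.of fun α β => (K α * ρ * (K β)ᴴ).trace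

theorem complementaryChannel_conj [Fintype k] (K : ι → Matrix m n R) (U : Matrix n k R)
    (ρ : Matrix k k R) :
    complementaryChannel K (U * ρ * Uᴴ) = complementaryChannel (fun α => K α * U) ρ := by
  ext α β
  simp only [complementaryChannel, of_apply, conjTranspose_mul, Matrix.mul_assoc]

theorem complementaryChannel_isometry_mul [Fintype l] [DecidableEq m] (L : ι → Matrix m n R)
    {V : Matrix l m R} (hV : Vᴴ * V = 1) (ρ : Matrix n n R) :
    complementaryChannel (fun α => V * L α) ρ = complementaryChannel L ρ := by
  ext α β
  calc (V * L α * ρ * (V * L β)ᴴ).trace = (V * (L α * ρ * (L β)ᴴ * Vᴴ)).trace := by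
        simp only [conjTranspose_mul, Matrix.mul_assoc]
    _ = (L α * ρ * (L β)ᴴ * Vᴴ * V).trace := trace_mul_comm _ _
    _ = (L α * ρ * (L β)ᴴ).trace := by rw [Matrix.mul_assoc _ Vᴴ, hV, Matrix.mul_one]

theorem complementaryChannel_sum_smul [Fintype ι] (K : ι → Matrix m n R) (Ω : Matrix ι ι R)
    (ρ : Matrix n n R) :
    complementaryChannel (fun α => ∑ β, Ω α β • K β) ρ = Ω * complementaryChannel K ρ * Ωᴴ := by
  ext α β
  simp only [complementaryChannel, of_apply, mul_apply, Matrix.sum_mul, Matrix.mul_sum,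
    conjTranspose_sum, conjTranspose_smul, Matrix.smul_mul, Matrix.mul_smul, trace_sum,
    trace_smul, smul_eq_mul, conjTranspose_apply, Finset.sum_mul, Finset.mul_sum]
  exact Finset.sum_congr rfl fun _ _ => Finset.sum_congr rfl fun _ _ => mul_comm _ _

end

theorem complementary_channel_covariant_general {n ι : Type*} [Fintype n] [DecidableEq n]
    [Fintype ι] (K : ι → Matrix n n ℂ) (U V : Matrix n n ℂ)
    (hV : V ∈ Matrix.unitaryGroup n ℂ)
    (Ω : Matrix ι ι ℂ)
    (hΩ : ∀ α, Vᴴ * K α * U = ∑ β, Ω α β • K β)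
    (ρ : Matrix n n ℂ) :
    (Matrix.of fun α β : ι => (K α * (U * ρ * Uᴴ) * (K β)ᴴ).trace) =
      Ω * (Matrix.of fun α β : ι => (K α * ρ * (K β)ᴴ).trace) * Ωᴴ := by
  have hKU : (fun α => K α * U) = fun α => V * ∑ β, Ω α β • K β := by
    have hVV : V * Vᴴ = 1 := mem_unitaryGroup_iff.mp hV
    funext α
    rw [← hΩ, ← Matrix.mul_assoc, ← Matrix.mul_assoc, hVV, Matrix.one_mul]
  change complementaryChannel K (U * ρ * Uᴴ) = Ω * complementaryChannel K ρ * Ωᴴ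
  rw [complementaryChannel_conj, hKU,
    complementaryChannel_isometry_mul _ (mem_unitaryGroup_iff'.mp hV), complementaryChannel_sum_smul]

/-- Covariance of the complementary channel: if `V† K_α U = Σ_β Ω_{αβ} K_β` for all
`α`, with `U` and `V` unitary, then the complementary channel
`Φ^c(ρ)_{αβ} = Tr(K_α ρ K_β†)` satisfies `Φ^c(U ρ U†) = Ω Φ^c(ρ) Ω†`. -/
theorem complementary_channel_covariant {n ι : Type*} [Fintype n] [DecidableEq n]
    [Fintype ι] (K : ι → Matrix n n ℂ) (U V : Matrix n n ℂ)
    (hU : U ∈ Matrix.unitaryGroup n ℂ) (hV : V ∈ Matrix.unitaryGroup n ℂ)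
    (Ω : Matrix ι ι ℂ)
    (hΩ : ∀ α, Vᴴ * K α * U = ∑ β, Ω α β • K β)
    (ρ : Matrix n n ℂ) :
    (Matrix.of fun α β : ι => (K α * (U * ρ * Uᴴ) * (K β)ᴴ).trace) =
      Ω * (Matrix.of fun α β : ι => (K α * ρ * (K β)ᴴ).trace) * Ωᴴ :=
  complementary_channel_covariant_general K U V hV Ω hΩ ρ
end

section
/- For every vector ψ ∈ ℂ³ with ‖ψ‖ = 1, there exist a real orthogonal 3×3 matrix O with det O = 1, real numbers θ and φ, and a complex number c with |c| = 1, such that O·ψ = c · (e^{iφ}·cos θ, sin θ, 0); i.e., every unit vector in ℂ³ can be brought to this normal form by an SO(3) rotation and a global phase. -/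
/-!
Write `S = ∑ ψᵢ²` and pick a phase `c` with `c̄² S ≥ 0`, i.e. `c² = e^{i arg S}`. Then
`c̄ ψ = a + i b` with real vectors `a`, `b`, and `Im (c̄² S) = 2 a ⬝ b` vanishes, so `a ⊥ b`.
A rotation sends `b` to `(|b|, 0, 0)` and `a` to `(0, |a|, 0)`, giving `O ψ = c (i |b|, |a|, 0)`
with `|a|² + |b|² = ‖ψ‖² = 1`.
-/

open Matrix Complex ComplexConjugate

lemma dotProduct_self_nonneg {ι R : Type*} [Fintype ι] [Ring R] [LinearOrder R]
    [IsStrictOrderedRing R] (x : ι → R) : 0 ≤ x ⬝ᵥ x :=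
  Finset.sum_nonneg fun i _ => mul_self_nonneg (x i)

lemma dotProduct_self_inv_sqrt_smul {ι : Type*} [Fintype ι] {x : ι → ℝ} (hx : x ≠ 0) :
    ((√(x ⬝ᵥ x))⁻¹ • x) ⬝ᵥ ((√(x ⬝ᵥ x))⁻¹ • x) = 1 := by
  have hpos : 0 < x ⬝ᵥ x :=
    (dotProduct_self_nonneg x).lt_of_ne' (dotProduct_self_eq_zero.not.mpr hx)
  rw [smul_dotProduct, dotProduct_smul, smul_eq_mul, smul_eq_mul, ← mul_assoc, ← mul_inv,
    Real.mul_self_sqrt hpos.le, inv_mul_cancel₀ hpos.ne']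

lemma exists_dotProduct_self_eq_one_dotProduct_eq_zero (u : Fin 3 → ℝ) :
    ∃ v : Fin 3 → ℝ, v ⬝ᵥ v = 1 ∧ u ⬝ᵥ v = 0 := by
  obtain ⟨w, hw, huw⟩ : ∃ w : Fin 3 → ℝ, w ≠ 0 ∧ u ⬝ᵥ w = 0 := by
    by_cases h : u 0 = 0 ∧ u 1 = 0
    · exact ⟨![1, 0, 0], by simp, by simp [dotProduct, Fin.sum_univ_three, h.1]⟩
    · refine ⟨![u 1, -u 0, 0], fun hw => h ⟨?_, ?_⟩, ?_⟩
      · simpa using congrFun hw 1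
      · simpa using congrFun hw 0
      · simp only [dotProduct, Fin.sum_univ_three, cons_val_zero, cons_val_one, cons_val, mul_neg,
          mul_zero, add_zero]
        ring
  exact ⟨_, dotProduct_self_inv_sqrt_smul hw, by rw [dotProduct_smul, huw, smul_zero]⟩

lemma exists_dotProduct_self_eq_one_eq_sqrt_smul {u x : Fin 3 → ℝ} (hux : u ⬝ᵥ x = 0) :
    ∃ v : Fin 3 → ℝ, v ⬝ᵥ v = 1 ∧ u ⬝ᵥ v = 0 ∧ x = √(x ⬝ᵥ x) • v := by
  by_cases hx : x = 0
  · obtain ⟨v, hv, huv⟩ := exists_dotProduct_self_eq_one_dotProduct_eq_zero u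
    exact ⟨v, hv, huv, by simp [hx]⟩
  · have hs : √(x ⬝ᵥ x) ≠ 0 := by
      rw [Real.sqrt_ne_zero (dotProduct_self_nonneg x)]
      exact dotProduct_self_eq_zero.not.mpr hx
    refine ⟨_, dotProduct_self_inv_sqrt_smul hx, ?_, ?_⟩
    · rw [dotProduct_smul, hux, smul_zero]
    · rw [smul_smul, mul_inv_cancel₀ hs, one_smul]

lemma mulVec_of_fin_three {R : Type*} [CommRing R] (r₀ r₁ r₂ x : Fin 3 → R) :
    of ![r₀, r₁, r₂] *ᵥ x = ![r₀ ⬝ᵥ x, r₁ ⬝ᵥ x, r₂ ⬝ᵥ x] := by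
  ext i; fin_cases i <;> rfl

-- The rotation has rows `u`, `v`, `u ⨯₃ v`.
lemma exists_rotation_mulVec_eq_single {u v : Fin 3 → ℝ} (hu : u ⬝ᵥ u = 1) (hv : v ⬝ᵥ v = 1)
    (huv : u ⬝ᵥ v = 0) :
    ∃ O : Matrix (Fin 3) (Fin 3) ℝ, Oᵀ * O = 1 ∧ O.det = 1 ∧
      O *ᵥ u = ![1, 0, 0] ∧ O *ᵥ v = ![0, 1, 0] := by
  set w := u ⨯₃ v
  have hvu : v ⬝ᵥ u = 0 := by rw [dotProduct_comm, huv]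
  have hw : w ⬝ᵥ w = 1 := by rw [cross_dot_cross, hu, hv, huv, hvu]; ring
  have huw : u ⬝ᵥ w = 0 := dot_self_cross u v
  have hvw : v ⬝ᵥ w = 0 := dot_cross_self u v
  have hwu : w ⬝ᵥ u = 0 := by rw [dotProduct_comm, huw]
  have hwv : w ⬝ᵥ v = 0 := by rw [dotProduct_comm, hvw]
  refine ⟨of ![u, v, w], ?_, ?_, ?_, ?_⟩
  · rw [mul_eq_one_comm]
    have hrows : ∀ i j, (of ![u, v, w] * (of ![u, v, w])ᵀ) i j = ![u, v, w] i ⬝ᵥ ![u, v, w] j :=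
      fun _ _ => rfl
    ext i j
    rw [hrows]
    fin_cases i <;> fin_cases j <;>
      simp [hu, hv, hw, huv, hvu, huw, hvw, hwu, hwv]
  · change det ![u, v, w] = 1
    rw [← triple_product_eq_det, triple_product_permutation, triple_product_permutation, hw]
  · rw [mulVec_of_fin_three, hu, hvu, hwu]
  · rw [mulVec_of_fin_three, huv, hv, hwv]

lemma exists_rotation_mulVec_eq_of_dotProduct_eq_zero {a b : Fin 3 → ℝ} (hab : a ⬝ᵥ b = 0) :
    ∃ O : Matrix (Fin 3) (Fin 3) ℝ, Oᵀ * O = 1 ∧ O.det = 1 ∧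
      O *ᵥ b = ![√(b ⬝ᵥ b), 0, 0] ∧ O *ᵥ a = ![0, √(a ⬝ᵥ a), 0] := by
  obtain ⟨v, hv, hbv, hav⟩ :=
    exists_dotProduct_self_eq_one_eq_sqrt_smul (u := b) (by rw [dotProduct_comm, hab])
  obtain ⟨u, hu, hvu, hbu⟩ :=
    exists_dotProduct_self_eq_one_eq_sqrt_smul (u := v) (by rw [dotProduct_comm, hbv])
  obtain ⟨O, hO, hdet, hOu, hOv⟩ :=
    exists_rotation_mulVec_eq_single hu hv (by rw [dotProduct_comm, hvu])
  refine ⟨O, hO, hdet, ?_, ?_⟩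
  · nth_rw 1 [hbu]; rw [mulVec_smul, hOu]; simp
  · nth_rw 1 [hav]; rw [mulVec_smul, hOv]; simp

lemma exists_cos_sin_eq {x y : ℝ} (h : x ^ 2 + y ^ 2 = 1) :
    ∃ θ : ℝ, Real.cos θ = x ∧ Real.sin θ = y := by
  set z : ℂ := x + y * I
  have hz : ‖z‖ = 1 :=
    (pow_left_inj₀ (norm_nonneg z) zero_le_one two_ne_zero).mp
      (by rw [Complex.sq_norm, normSq_add_mul_I, h, one_pow])
  have hz0 : z ≠ 0 := norm_ne_zero_iff.mp (by rw [hz]; exact one_ne_zero)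
  exact ⟨z.arg, by simp [cos_arg hz0, hz, z], by simp [sin_arg, hz, z]⟩

lemma exists_norm_eq_one_conj_sq_mul_eq_norm (S : ℂ) :
    ∃ c : ℂ, ‖c‖ = 1 ∧ conj c ^ 2 * S = ‖S‖ := by
  set c := exp ((S.arg / 2 : ℝ) * I)
  have hc : ‖c‖ = 1 := norm_exp_ofReal_mul_I _
  have hcc : conj c * c = 1 := by
    rw [mul_comm, mul_conj, normSq_eq_norm_sq, hc]; norm_num
  have hc2 : c ^ 2 = exp (S.arg * I) := by
    rw [sq, ← exp_add]; push_cast; ring_nf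
  refine ⟨c, hc, ?_⟩
  calc conj c ^ 2 * S = conj c ^ 2 * (‖S‖ * exp (S.arg * I)) := by rw [norm_mul_exp_arg_mul_I]
    _ = ‖S‖ * (conj c * c) ^ 2 := by rw [← hc2]; ring
    _ = ‖S‖ := by rw [hcc]; ring

lemma im_sum_sq {ι : Type*} [Fintype ι] (w : ι → ℂ) :
    (∑ i, w i ^ 2).im = 2 * ((fun i => (w i).re) ⬝ᵥ fun i => (w i).im) := by
  simp only [im_sum, sq, mul_im, dotProduct, Finset.mul_sum]
  exact Finset.sum_congr rfl fun i _ => by ring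

lemma exists_norm_eq_one_eq_mul_re_add_im {ι : Type*} [Fintype ι] (z : ι → ℂ) :
    ∃ (c : ℂ) (a b : ι → ℝ), ‖c‖ = 1 ∧ a ⬝ᵥ b = 0 ∧ z = fun i => c * (a i + b i * I) := by
  obtain ⟨c, hc, hS⟩ := exists_norm_eq_one_conj_sq_mul_eq_norm (∑ i, z i ^ 2)
  have hcc : c * conj c = 1 := by rw [mul_conj, normSq_eq_norm_sq, hc]; norm_num
  set w := fun i => conj c * z i
  refine ⟨c, fun i => (w i).re, fun i => (w i).im, hc, ?_, ?_⟩
  · have him := im_sum_sq w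
    simp only [w, mul_pow, ← Finset.mul_sum, hS, ofReal_im] at him
    linarith
  · ext i
    simp only [re_add_im, w, ← mul_assoc, hcc, one_mul]

lemma sum_norm_mul_re_add_im_sq {ι : Type*} [Fintype ι] {c : ℂ} (hc : ‖c‖ = 1) (a b : ι → ℝ) :
    ∑ i, ‖c * (a i + b i * I)‖ ^ 2 = a ⬝ᵥ a + b ⬝ᵥ b := by
  simp only [norm_mul, hc, one_mul, Complex.sq_norm, normSq_add_mul_I]
  simp only [dotProduct, ← Finset.sum_add_distrib, sq]

lemma map_ofReal_mulVec_mul_re_add_im {m n : Type*} [Fintype n] (O : Matrix m n ℝ) (c : ℂ)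
    (a b : n → ℝ) :
    O.map ofReal *ᵥ (fun i => c * (a i + b i * I)) =
      fun i => c * ((O *ᵥ a) i + (O *ᵥ b) i * I) := by
  ext i
  simp only [mulVec, dotProduct, map_apply, ofReal_sum, ofReal_mul, Finset.sum_mul,
    Finset.mul_sum, ← Finset.sum_add_distrib]
  exact Finset.sum_congr rfl fun j _ => by ring

/-- Every unit vector in `ℂ³` can be brought to the normal form
`c·(e^{iφ}·cos θ, sin θ, 0)` (with `|c| = 1`) by a real rotation `O ∈ SO(3)`. -/
theorem unit_vector_normal_form (ψ : EuclideanSpace ℂ (Fin 3)) (hψ : ‖ψ‖ = 1) :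
    ∃ (O : Matrix (Fin 3) (Fin 3) ℝ) (θ φ : ℝ) (c : ℂ),
      Oᵀ * O = 1 ∧ O.det = 1 ∧ ‖c‖ = 1 ∧
      (O.map Complex.ofReal).mulVec (ψ : Fin 3 → ℂ) =
        c • ![Complex.exp (Complex.I * φ) * (Real.cos θ : ℂ), (Real.sin θ : ℂ), 0] := by
  obtain ⟨c, a, b, hc, hab, hψc⟩ := exists_norm_eq_one_eq_mul_re_add_im (ψ : Fin 3 → ℂ)
  obtain ⟨O, hO, hdet, hOb, hOa⟩ := exists_rotation_mulVec_eq_of_dotProduct_eq_zero hab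
  have hsq : √(b ⬝ᵥ b) ^ 2 + √(a ⬝ᵥ a) ^ 2 = 1 := by
    have hnorm := EuclideanSpace.norm_sq_eq ψ
    rw [hψ, hψc, sum_norm_mul_re_add_im_sq hc] at hnorm
    rw [Real.sq_sqrt (dotProduct_self_nonneg b), Real.sq_sqrt (dotProduct_self_nonneg a)]
    linarith
  obtain ⟨θ, hcos, hsin⟩ := exists_cos_sin_eq hsq
  refine ⟨O, θ, Real.pi / 2, c, hO, hdet, hc, ?_⟩
  rw [hψc, map_ofReal_mulVec_mul_re_add_im, hOa, hOb, hcos, hsin, mul_comm I, ofReal_div,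
    ofReal_ofNat, exp_pi_div_two_mul_I]
  ext i
  fin_cases i <;> simp [mul_comm]
end

section
/- For every x ∈ ℝ and every vector ψ ∈ ℂ³ with ‖ψ‖ = 1, x/2 is an eigenvalue of Λ_x(ψψ†): det(Λ_x(ψψ†) − (x/2)·I₃) = 0, where ψψ† denotes the outer product matrix with entries ψ_i·conj(ψ_j). -/
/-!
Since `Tr(ψψ†) = ‖ψ‖² = 1`, the identity terms cancel and
`Λ_x(ψψ†) − (x/2)·I₃ = (1 − x)·ψψ† − (x/2)·ψ̄ψᵀ` is a sum of two rank-one matrices.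
Its rank is at most `2 < 3`, so its determinant vanishes.
-/

open Matrix

namespace Matrix

variable {R m n : Type*}

theorem vecMulVec_add_vecMulVec_eq_mul [CommSemiring R] (u w : m → R) (v z : n → R) :
    vecMulVec u v + vecMulVec w z =
      of (fun i k => ![u i, w i] k) * of (fun k j => ![v j, z j] k) := by
  ext i j
  simp [mul_apply, Fin.sum_univ_two, vecMulVec_apply]

theorem rank_vecMulVec_add_vecMulVec_le [CommSemiring R] [StrongRankCondition R] [Fintype n]
    (u w : m → R) (v z : n → R) : (vecMulVec u v + vecMulVec w z).rank ≤ 2 := by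
  rw [vecMulVec_add_vecMulVec_eq_mul]
  exact (rank_mul_le_left _ _).trans ((rank_le_card_width _).trans_eq (Fintype.card_fin 2))

theorem det_vecMulVec_add_vecMulVec_eq_zero [CommRing R] [IsDomain R] [Fintype n]
    [DecidableEq n] (hn : 2 < Fintype.card n) (u w v z : n → R) :
    (vecMulVec u v + vecMulVec w z).det = 0 := by
  by_contra hdet
  have hfull := rank_of_det_ne_zero hdet
  have hle := rank_vecMulVec_add_vecMulVec_le u w v z
  omega

end Matrix

theorem EuclideanSpace.trace_vecMulVec_star {𝕜 ι : Type*} [RCLike 𝕜] [Fintype ι]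
    (ψ : EuclideanSpace 𝕜 ι) :
    (vecMulVec (ψ : ι → 𝕜) (star (ψ : ι → 𝕜))).trace = (‖ψ‖ : 𝕜) ^ 2 := by
  rw [trace_vecMulVec, ← EuclideanSpace.inner_eq_star_dotProduct, inner_self_eq_norm_sq_to_K]

theorem Lam_sub_smul_one {x : ℝ} {ρ : Matrix (Fin 3) (Fin 3) ℂ} (hρ : ρ.trace = 1) :
    Lam x ρ - ((x : ℂ) / 2) • (1 : Matrix (Fin 3) (Fin 3) ℂ) =
      ((1 : ℂ) - x) • ρ - ((x : ℂ) / 2) • ρᵀ := by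
  rw [Lam, hρ, one_smul, smul_sub]
  abel

/-- For every unit vector `ψ ∈ ℂ³`, the number `x/2` is an eigenvalue of
`Λ_x(ψψ†)`: the determinant of `Λ_x(ψψ†) − (x/2)·I₃` vanishes. -/
theorem lam_half_x_eigenvalue (x : ℝ) (ψ : EuclideanSpace ℂ (Fin 3)) (hψ : ‖ψ‖ = 1) :
    (Lam x (Matrix.vecMulVec (ψ : Fin 3 → ℂ) (star (ψ : Fin 3 → ℂ))) -
        ((x : ℂ) / 2) • (1 : Matrix (Fin 3) (Fin 3) ℂ)).det = 0 := by
  have htrace : (vecMulVec (ψ : Fin 3 → ℂ) (star (ψ : Fin 3 → ℂ))).trace = 1 := by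
    rw [EuclideanSpace.trace_vecMulVec_star, hψ]
    norm_num
  rw [Lam_sub_smul_one htrace, transpose_vecMulVec, sub_eq_add_neg, ← neg_smul,
    ← smul_vecMulVec, ← smul_vecMulVec]
  exact det_vecMulVec_add_vecMulVec_eq_zero (by simp) _ _ _ _
end

section
/- For every x ∈ ℝ and every vector ψ ∈ ℂ³ with ‖ψ‖ = 1, det(Λ_x(ψψ†)) = (x²(1−x)/4) · |Σ_{i} ψ_i²|², where ψψ† is the outer product matrix with entries ψ_i·conj(ψ_j) and Σ_i ψ_i² is the (non-conjugated) bilinear square of ψ. -/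
/-!
For a unit vector `ψ` the trace of `ψψ†` is `1`, so `Λ_x(ψψ†) = (x/2) I + (1-x) ψψ† - (x/2) ψ̄ψ̄†`
is a rank-two perturbation of a scalar matrix. The determinant of `a I + b u u'ᵀ + c v v'ᵀ` is
`a` times the `2 × 2` determinant `(a + b u'·u)(a + c v'·v) - b c (u'·v)(v'·u)`. Here the factor
`a + c v'·v = x/2 - x/2` vanishes, and what remains is `(x/2)(1-x)(x/2) · conj(ψᵀψ) · ψᵀψ`.
-/

open Matrix

theorem det_fin_three_smul_one_add_smul_vecMulVec_add_smul_vecMulVec {R : Type*} [CommRing R]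
    (a b c : R) (u u' v v' : Fin 3 → R) :
    (a • 1 + b • vecMulVec u u' + c • vecMulVec v v').det =
      a * ((a + b * (u' ⬝ᵥ u)) * (a + c * (v' ⬝ᵥ v)) - b * c * (u' ⬝ᵥ v) * (v' ⬝ᵥ u)) := by
  simp only [det_fin_three, Matrix.add_apply, Matrix.smul_apply, one_apply, vecMulVec_apply,
    dotProduct, Fin.sum_univ_three, smul_eq_mul]
  simp only [Fin.isValue, Fin.reduceEq, if_true, if_false]
  ring

theorem EuclideanSpace.dotProduct_star_self_of_norm_eq_one {𝕜 ι : Type*} [RCLike 𝕜] [Fintype ι]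
    {ψ : EuclideanSpace 𝕜 ι} (hψ : ‖ψ‖ = 1) : ψ.ofLp ⬝ᵥ star ψ.ofLp = 1 := by
  rw [← EuclideanSpace.inner_eq_star_dotProduct, inner_self_eq_norm_sq_to_K, hψ]
  simp

theorem Lam_eq_of_trace_eq_one (x : ℝ) {ρ : Matrix (Fin 3) (Fin 3) ℂ} (hρ : ρ.trace = 1) :
    Lam x ρ = ((x : ℂ) / 2) • 1 + (1 - (x : ℂ)) • ρ + (-((x : ℂ) / 2)) • ρᵀ := by
  rw [Lam, hρ, one_smul, smul_sub, neg_smul]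
  abel

/-- For every unit vector `ψ ∈ ℂ³`,
`det(Λ_x(ψψ†)) = (x²(1−x)/4) · |Σ_i ψ_i²|²`. -/
theorem lam_det_pure_state (x : ℝ) (ψ : EuclideanSpace ℂ (Fin 3)) (hψ : ‖ψ‖ = 1) :
    (Lam x (Matrix.vecMulVec (ψ : Fin 3 → ℂ) (star (ψ : Fin 3 → ℂ)))).det =
      ((x ^ 2 * (1 - x) / 4 * ‖∑ i : Fin 3, ψ i ^ 2‖ ^ 2 : ℝ) : ℂ) := by
  have hunit := EuclideanSpace.dotProduct_star_self_of_norm_eq_one hψ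
  have hunit' : star ψ.ofLp ⬝ᵥ ψ.ofLp = 1 := by rw [dotProduct_comm, hunit]
  have hsq : (‖∑ i : Fin 3, ψ i ^ 2‖ : ℂ) ^ 2 = star (ψ.ofLp ⬝ᵥ ψ.ofLp) * (ψ.ofLp ⬝ᵥ ψ.ofLp) := by
    rw [← Complex.conj_mul']
    simp only [dotProduct, sq]
    rfl
  rw [Lam_eq_of_trace_eq_one x (by rwa [trace_vecMulVec]), transpose_vecMulVec,
    det_fin_three_smul_one_add_smul_vecMulVec_add_smul_vecMulVec, hunit, hunit',
    star_dotProduct_star]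
  push_cast
  rw [hsq]
  ring
end

section
/- Minimum output entropy of Λ_x: for every real x with 0 ≤ x ≤ 1 and every vector ψ ∈ ℂ³ with ‖ψ‖ = 1, the matrix A = Λ_x(ψψ†) is Hermitian positive semidefinite, and the sum over its (real) eigenvalues λ of −λ·log λ (with 0·log 0 = 0) is at least −(x/2)·log(x/2) − (1 − x/2)·log(1 − x/2); i.e., the von Neumann entropy of any pure-state output of Λ_x is at least the binary entropy h(x/2). -/
/-!
`Λ_x(ψψ†) = (1 - x) ψψ† + (x/2) (1 - ψ̄ψ̄†)` is a sum of positive semidefinite terms, since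
`ψ̄ψ̄† = (ψψ†)ᵀ` is an orthogonal projection. A vector `w ∈ ℂ³` orthogonal to both `ψ` and `ψ̄` is an
eigenvector with eigenvalue `x/2`, and the trace is `1`; so the eigenvalues form a probability
vector with an atom `x/2`, and subadditivity of `t ↦ -t log t` on `[0, ∞)` bounds the entropy
below by `h(x/2)`.
-/

open Matrix
open scoped ComplexOrder

namespace Real

lemma negMulLog_add_le {a b : ℝ} (ha : 0 ≤ a) (hb : 0 ≤ b) :
    negMulLog (a + b) ≤ negMulLog a + negMulLog b := by
  rcases ha.eq_or_lt with rfl | ha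
  · simp
  rcases hb.eq_or_lt with rfl | hb
  · simp
  have hla : log a ≤ log (a + b) := log_le_log ha (by linarith)
  have hlb : log b ≤ log (a + b) := log_le_log hb (by linarith)
  simp only [negMulLog]
  nlinarith

lemma negMulLog_sum_le {ι : Type*} {s : Finset ι} {f : ι → ℝ} (hf : ∀ i ∈ s, 0 ≤ f i) :
    negMulLog (∑ i ∈ s, f i) ≤ ∑ i ∈ s, negMulLog (f i) :=
  Finset.le_sum_of_subadditive_on_pred negMulLog (0 ≤ ·) negMulLog_zero.le
    (fun _ _ ↦ negMulLog_add_le) (fun _ _ ↦ add_nonneg) f hf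

lemma binEntropy_le_sum_negMulLog {ι : Type*} [Fintype ι] {p : ι → ℝ} (hp : ∀ i, 0 ≤ p i)
    (hsum : ∑ i, p i = 1) (j : ι) : binEntropy (p j) ≤ ∑ i, negMulLog (p i) := by
  classical
  have hrest : ∑ i ∈ Finset.univ.erase j, p i = 1 - p j := by
    rw [← hsum, ← Finset.add_sum_erase _ _ (Finset.mem_univ j), add_sub_cancel_left]
  rw [binEntropy_eq_negMulLog_add_negMulLog_one_sub, ← hrest,
    ← Finset.add_sum_erase _ _ (Finset.mem_univ j)]
  gcongr
  exact negMulLog_sum_le fun i _ ↦ hp i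

end Real

namespace Matrix

lemma exists_ne_zero_dotProduct_eq_zero {K n : Type*} [Field K] [Fintype n]
    (hn : 2 < Fintype.card n) (u v : n → K) : ∃ w ≠ 0, u ⬝ᵥ w = 0 ∧ v ⬝ᵥ w = 0 := by
  have hker : LinearMap.ker (of ![u, v]).mulVecLin ≠ ⊥ :=
    LinearMap.ker_ne_bot_of_finrank_lt (by simpa using hn)
  obtain ⟨w, hw, hw0⟩ := (Submodule.ne_bot_iff _).mp hker
  have hw' := congrFun (LinearMap.mem_ker.mp hw)
  exact ⟨w, hw0, by simpa using hw' 0, by simpa using hw' 1⟩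

variable {𝕜 n : Type*} [RCLike 𝕜] [Fintype n]

lemma isStarProjection_vecMulVec_self_star {v : n → 𝕜} (hv : star v ⬝ᵥ v = 1) :
    IsStarProjection (vecMulVec v (star v)) where
  isIdempotentElem := by rw [IsIdempotentElem, vecMulVec_mul_vecMulVec, hv, one_smul]
  isSelfAdjoint := (posSemidef_vecMulVec_self_star v).isHermitian

lemma posSemidef_one_sub_vecMulVec_self_star [DecidableEq n] {v : n → 𝕜}
    (hv : star v ⬝ᵥ v = 1) : (1 - vecMulVec v (star v)).PosSemidef := by
  open scoped MatrixOrder in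
  exact (isStarProjection_vecMulVec_self_star hv).one_sub.nonneg.posSemidef

lemma IsHermitian.exists_eigenvalues_eq [DecidableEq n] {A : Matrix n n 𝕜} (hA : A.IsHermitian)
    {v : n → 𝕜} (hv : v ≠ 0) {μ : ℝ} (h : A *ᵥ v = μ • v) : ∃ i, hA.eigenvalues i = μ := by
  have hμ : Module.End.HasEigenvalue (toLin' A) (μ : 𝕜) :=
    Module.End.hasEigenvalue_of_hasEigenvector
      ⟨Module.End.mem_eigenspace_iff.mpr (by simpa [RCLike.real_smul_eq_coe_smul] using h), hv⟩
  rw [← Set.mem_range, ← hA.spectrum_real_eq_range_eigenvalues, ← spectrum.algebraMap_mem_iff 𝕜,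
    ← spectrum_toLin']
  exact Module.End.hasEigenvalue_iff_mem_spectrum.mp hμ

lemma PosSemidef.binEntropy_le_sum_negMulLog_eigenvalues [DecidableEq n] {A : Matrix n n 𝕜}
    (hA : A.PosSemidef) (htr : A.trace = 1) {v : n → 𝕜} (hv : v ≠ 0) {μ : ℝ}
    (h : A *ᵥ v = μ • v) : Real.binEntropy μ ≤ ∑ i, Real.negMulLog (hA.1.eigenvalues i) := by
  obtain ⟨i, rfl⟩ := hA.1.exists_eigenvalues_eq hv h
  refine Real.binEntropy_le_sum_negMulLog hA.eigenvalues_nonneg ?_ i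
  rw [hA.1.trace_eq_sum_eigenvalues] at htr
  exact_mod_cast htr

end Matrix

lemma trace_Lam (x : ℝ) (ρ : Matrix (Fin 3) (Fin 3) ℂ) : (Lam x ρ).trace = ρ.trace := by
  simp only [Lam, trace_add, trace_smul, trace_sub, trace_one, trace_transpose, smul_eq_mul,
    Fintype.card_fin, Nat.cast_ofNat]
  ring

lemma Lam_vecMulVec_self_star (x : ℝ) {u : Fin 3 → ℂ} (hu : u ⬝ᵥ star u = 1) :
    Lam x (vecMulVec u (star u)) =
      (1 - x) • vecMulVec u (star u) + (x / 2) • (1 - vecMulVec (star u) u) := by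
  rw [Lam, trace_vecMulVec, hu, one_smul, transpose_vecMulVec]
  simp only [← Complex.coe_smul]
  push_cast
  rfl

lemma Lam_vecMulVec_self_star_mulVec (x : ℝ) {u w : Fin 3 → ℂ} (hu : u ⬝ᵥ star u = 1)
    (hw₁ : star u ⬝ᵥ w = 0) (hw₂ : u ⬝ᵥ w = 0) :
    Lam x (vecMulVec u (star u)) *ᵥ w = (x / 2) • w := by
  simp [Lam_vecMulVec_self_star x hu, add_mulVec, sub_mulVec, smul_mulVec, vecMulVec_mulVec,
    hw₁, hw₂]

lemma posSemidef_Lam_vecMulVec_self_star {x : ℝ} {u : Fin 3 → ℂ} (hu : u ⬝ᵥ star u = 1)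
    (hx0 : 0 ≤ x) (hx1 : x ≤ 1) : (Lam x (vecMulVec u (star u))).PosSemidef := by
  have hproj := posSemidef_one_sub_vecMulVec_self_star (v := star u) (by rwa [star_star])
  rw [star_star] at hproj
  rw [Lam_vecMulVec_self_star x hu]
  exact ((posSemidef_vecMulVec_self_star u).smul (sub_nonneg.2 hx1)).add
    (hproj.smul (div_nonneg hx0 zero_le_two))

/-- Minimum output entropy of `Λ_x`: for `0 ≤ x ≤ 1` and any unit vector
`ψ ∈ ℂ³`, the output `Λ_x(ψψ†)` is (Hermitian) positive semidefinite and its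
von Neumann entropy `Σ_λ −λ log λ` (over eigenvalues, with `0·log 0 = 0`) is
at least the binary entropy `−(x/2)log(x/2) − (1−x/2)log(1−x/2)`. -/
theorem lam_min_output_entropy (x : ℝ) (hx0 : 0 ≤ x) (hx1 : x ≤ 1)
    (ψ : EuclideanSpace ℂ (Fin 3)) (hψ : ‖ψ‖ = 1) :
    ∃ h : (Lam x (Matrix.vecMulVec (ψ : Fin 3 → ℂ) (star (ψ : Fin 3 → ℂ)))).PosSemidef,
      -(x / 2) * Real.log (x / 2) - (1 - x / 2) * Real.log (1 - x / 2) ≤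
        ∑ i, Real.negMulLog (h.1.eigenvalues i) := by
  set u : Fin 3 → ℂ := ψ.ofLp
  have hu : u ⬝ᵥ star u = 1 := by
    rw [← EuclideanSpace.inner_eq_star_dotProduct, inner_self_eq_norm_sq_to_K, hψ]
    norm_num
  have hA := posSemidef_Lam_vecMulVec_self_star hu hx0 hx1
  refine ⟨hA, ?_⟩
  obtain ⟨w, hw0, hw₁, hw₂⟩ := exists_ne_zero_dotProduct_eq_zero (by simp) (star u) u
  have hentropy : -(x / 2) * Real.log (x / 2) - (1 - x / 2) * Real.log (1 - x / 2) =
      Real.binEntropy (x / 2) := by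
    simp only [Real.binEntropy_eq_negMulLog_add_negMulLog_one_sub, Real.negMulLog]
    ring
  rw [hentropy]
  exact hA.binEntropy_le_sum_negMulLog_eigenvalues
    (by rw [trace_Lam, trace_vecMulVec, hu]) hw0 (Lam_vecMulVec_self_star_mulVec x hu hw₁ hw₂)
end

section
/- For every x ∈ ℝ and the unit vector ψ₀ = (i, 1, 0)/√2 ∈ ℂ³: Λ_x(ψ₀ψ₀†) = [[(2−x)/4, i(2−x)/4, 0], [−i(2−x)/4, (2−x)/4, 0], [0, 0, x/2]], and its characteristic polynomial satisfies det(t·I₃ − Λ_x(ψ₀ψ₀†)) = t·(t − x/2)·(t − (1 − x/2)) for all t ∈ ℂ; in particular its eigenvalues are 0, x/2 and 1 − x/2, so this state attains the minimum output entropy h(x/2). -/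
open Matrix

/-- The unit vector `ψ₀ = (i, 1, 0)/√2 ∈ ℂ³`. -/
noncomputable def psi0 : Fin 3 → ℂ :=
  ((1 / Real.sqrt 2 : ℝ) : ℂ) • ![Complex.I, 1, 0]

theorem det_smul_one_sub_of_block_two_one {R : Type*} [CommRing R] (t a b c d e : R) :
    (t • (1 : Matrix (Fin 3) (Fin 3) R) - !![a, b, 0; c, d, 0; 0, 0, e]).det =
      ((t - a) * (t - d) - b * c) * (t - e) := by
  rw [det_fin_three]
  simp only [Fin.isValue, Matrix.sub_apply, Matrix.smul_apply, one_apply, of_apply, cons_val',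
    cons_val_zero, cons_val_fin_one, cons_val_one, cons_val, Fin.reduceEq, ↓reduceIte, smul_eq_mul]
  ring

theorem vecMulVec_psi0_star_psi0 :
    vecMulVec psi0 (star psi0) = !![1 / 2, Complex.I / 2, 0; -(Complex.I / 2), 1 / 2, 0; 0, 0, 0] := by
  have hsqrt : (Real.sqrt 2 : ℂ) ^ 2 = 2 := by
    rw [← Complex.ofReal_pow, Real.sq_sqrt zero_le_two, Complex.ofReal_ofNat]
  ext i j
  fin_cases i <;> fin_cases j <;>
    simp [vecMulVec, psi0, Pi.star_apply] <;>
    field_simp <;> simp [hsqrt]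

theorem Lam_vecMulVec_psi0_star_psi0 (x : ℝ) :
    Lam x (vecMulVec psi0 (star psi0)) =
      !![(2 - (x : ℂ)) / 4, Complex.I * (2 - (x : ℂ)) / 4, 0;
         -(Complex.I * (2 - (x : ℂ)) / 4), (2 - (x : ℂ)) / 4, 0;
         0, 0, (x : ℂ) / 2] := by
  rw [vecMulVec_psi0_star_psi0]
  ext i j
  fin_cases i <;> fin_cases j <;>
    simp [Lam, trace_fin_three, one_apply] <;> ring

/-- For the state `ψ₀ = (i,1,0)/√2`: the output `Λ_x(ψ₀ψ₀†)` equals the explicit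
matrix `[[(2−x)/4, i(2−x)/4, 0], [−i(2−x)/4, (2−x)/4, 0], [0, 0, x/2]]`, and its
characteristic polynomial is `t(t − x/2)(t − (1 − x/2))`; in particular the
eigenvalues are `0`, `x/2`, `1 − x/2`, attaining the minimum output entropy. -/
theorem lam_psi0_output (x : ℝ) :
    Lam x (Matrix.vecMulVec psi0 (star psi0)) =
      !![(2 - (x : ℂ)) / 4, Complex.I * (2 - (x : ℂ)) / 4, 0;
         -(Complex.I * (2 - (x : ℂ)) / 4), (2 - (x : ℂ)) / 4, 0;
         0, 0, (x : ℂ) / 2] ∧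
    ∀ t : ℂ,
      (t • (1 : Matrix (Fin 3) (Fin 3) ℂ) - Lam x (Matrix.vecMulVec psi0 (star psi0))).det =
        t * (t - (x : ℂ) / 2) * (t - (1 - (x : ℂ) / 2)) := by
  refine ⟨Lam_vecMulVec_psi0_star_psi0 x, fun t => ?_⟩
  rw [Lam_vecMulVec_psi0_star_psi0, det_smul_one_sub_of_block_two_one]
  -- the upper 2×2 block has trace 1 - x/2 and determinant 0, since i · (-i) = 1
  linear_combination (t - (x : ℂ) / 2) * ((2 - (x : ℂ)) / 4) ^ 2 * Complex.I_sq
end
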